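/- arXiv:2304.09743 — 2 statements merged into one kernel-verified Lean document; each statement's English description precedes it below -/
import Mathlib

section
/- Let V be a finite set, N ≥ 0, and S₁,…,S_N subsets of V, and run the cut process on every subset of V with this fixed sequence. Then for every U ⊆ V, every T ⊆ V, and every 0 ≤ r ≤ N: if U^r ∖ T ≠ ∅, then (U ∖ T)^r = U^r ∖ T. -/
open Finset

variable {α : Type*} [Fintype α] [DecidableEq α]

/-- `A` crosses `B` if both `B ∩ A` and `B ∖ A` are nonempty. -/
def Crosses (A B : Finset α) : Prop := (B ∩ A).Nonempty ∧ (B \ A).Nonempty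

instance (A B : Finset α) : Decidable (Crosses A B) := by unfold Crosses; infer_instance

/-- The cut process: `U⁰ = U`, and `U^{r+1} = U^r ∖ S_{r+1}` if `S_{r+1}` crosses
`U^r`, and `U^{r+1} = U^r` otherwise. -/
def cutProcess (S : ℕ → Finset α) (U : Finset α) : ℕ → Finset α
  | 0 => U
  | r + 1 =>
      if Crosses (S (r + 1)) (cutProcess S U r) then cutProcess S U r \ S (r + 1)
      else cutProcess S U r

/-- if `U^r ∖ T` is nonempty, then `(U ∖ T)^r = U^r ∖ T`. -/
theorem stmt14 (N : ℕ) (S : ℕ → Finset α) (U T : Finset α) (r : ℕ) (hr : r ≤ N)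
    (h : (cutProcess S U r \ T).Nonempty) :
    cutProcess S (U \ T) r = cutProcess S U r \ T := by
  induction r with
  | zero => rfl
  | succ r ih =>
    have hsub : cutProcess S U (r + 1) ⊆ cutProcess S U r := by
      show (if Crosses (S (r + 1)) (cutProcess S U r) then cutProcess S U r \ S (r + 1)
          else cutProcess S U r) ⊆ _
      split
      · exact sdiff_subset
      · exact subset_rfl
    have h' : (cutProcess S U r \ T).Nonempty :=
      h.mono (sdiff_subset_sdiff hsub subset_rfl)
    have IH := ih (Nat.le_of_succ_le hr) h'
    set A := cutProcess S U r with hA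
    set s := S (r + 1) with hs
    show (if Crosses s (cutProcess S (U \ T) r) then cutProcess S (U \ T) r \ s
        else cutProcess S (U \ T) r) = (if Crosses s A then A \ s else A) \ T
    rw [IH]
    have key : (A \ T) \ s = (A \ s) \ T := by
      ext x; simp [mem_sdiff]; tauto
    by_cases hcA : Crosses s A
    · by_cases hcB : Crosses s (A \ T)
      · rw [if_pos hcB, if_pos hcA, key]
      · rw [if_neg hcB, if_pos hcA]
        have hne : ((A \ s) \ T).Nonempty := by
          have : cutProcess S U (r + 1) = A \ s := if_pos hcA
          rwa [this] at h
        rw [← key] at hne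
        have h1 : ¬ ((A \ T) ∩ s).Nonempty := by
          intro hx; exact hcB ⟨hx, hne⟩
        rw [not_nonempty_iff_eq_empty] at h1
        ext x
        simp only [mem_sdiff]
        constructor
        · rintro ⟨hxA, hxT⟩
          refine ⟨⟨hxA, ?_⟩, hxT⟩
          intro hxs
          exact absurd (mem_inter.mpr ⟨mem_sdiff.mpr ⟨hxA, hxT⟩, hxs⟩)
            (by simp [h1])
        · rintro ⟨⟨hxA, _⟩, hxT⟩; exact ⟨hxA, hxT⟩
    · have hcB : ¬ Crosses s (A \ T) := by
        intro ⟨h1, h2⟩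
        exact hcA ⟨h1.mono (inter_subset_inter sdiff_subset subset_rfl),
          h2.mono (sdiff_subset_sdiff sdiff_subset subset_rfl)⟩
      rw [if_neg hcB, if_neg hcA]
end

section
/- Let V be a finite set, N ≥ 0, and S₁,…,S_N subsets of V, and run the cut process on every subset of V with this fixed sequence. Let U ⊆ V, T ⊆ V, and p ∈ U ∖ T. If p is last in U, i.e., U^N = {p}, then p is last in U ∖ T, i.e., (U ∖ T)^N = {p}. -/
open Finset

variable {α : Type*} [Fintype α] [DecidableEq α]

lemma cutProcess_succ_subset (S : ℕ → Finset α) (U : Finset α) (r : ℕ) :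
    cutProcess S U (r + 1) ⊆ cutProcess S U r := by
  show (if Crosses (S (r + 1)) (cutProcess S U r) then cutProcess S U r \ S (r + 1)
    else cutProcess S U r) ⊆ _
  split
  · exact sdiff_subset
  · exact subset_rfl

lemma cutProcess_mono (S : ℕ → Finset α) (U : Finset α) {r s : ℕ} (hrs : r ≤ s) :
    cutProcess S U s ⊆ cutProcess S U r := by
  induction s with
  | zero => simpa [Nat.le_zero.mp hrs] using subset_rfl
  | succ n ih =>
      rcases Nat.lt_or_ge r (n + 1) with h | h
      · exact (cutProcess_succ_subset S U n).trans (ih (Nat.lt_succ_iff.mp h))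
      · have : r = n + 1 := le_antisymm hrs h
        simp [this]

/-- if `p ∈ U ∖ T` is last in `U`, it is last in `U ∖ T`. -/
theorem stmt15 (N : ℕ) (S : ℕ → Finset α) (U T : Finset α) (p : α) (hp : p ∈ U \ T)
    (h : cutProcess S U N = {p}) :
    cutProcess S (U \ T) N = {p} := by
  have hpUs : ∀ s ≤ N, p ∈ cutProcess S U s := fun s hs =>
    cutProcess_mono S U hs (h ▸ mem_singleton_self p)
  have key : ∀ r ≤ N, p ∈ cutProcess S (U \ T) r ∧
      cutProcess S (U \ T) r ⊆ cutProcess S U r := by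
    intro r
    induction r with
    | zero => exact fun _ => ⟨hp, sdiff_subset⟩
    | succ n ih =>
        intro hn
        obtain ⟨hpW, hWU⟩ := ih (Nat.le_of_succ_le hn)
        have hpU1 : p ∈ cutProcess S U (n + 1) := hpUs (n + 1) hn
        show p ∈ (if _ then _ else _) ∧ (if _ then _ else _) ⊆ cutProcess S U (n + 1)
        by_cases hc : Crosses (S (n + 1)) (cutProcess S (U \ T) n)
        · -- W gets cut; then U also gets cut
          have hcU : Crosses (S (n + 1)) (cutProcess S U n) :=
            ⟨hc.1.mono (inter_subset_inter hWU subset_rfl), hc.2.mono (sdiff_subset_sdiff hWU subset_rfl)⟩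
          have hU1 : cutProcess S U (n + 1) = cutProcess S U n \ S (n + 1) := if_pos hcU
          have hpS : p ∉ S (n + 1) := by
            rw [hU1, mem_sdiff] at hpU1; exact hpU1.2
          rw [if_pos hc]
          exact ⟨mem_sdiff.mpr ⟨hpW, hpS⟩,
            hU1 ▸ sdiff_subset_sdiff hWU subset_rfl⟩
        · rw [if_neg hc]
          refine ⟨hpW, ?_⟩
          show cutProcess S (U \ T) n ⊆ (if _ then _ else _)
          by_cases hcU : Crosses (S (n + 1)) (cutProcess S U n)
          · rw [if_pos hcU]
            -- since S doesn't cross W, W ∩ S = ∅ or W ⊆ S; latter impossible as p ∉ S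
            have hpS : p ∉ S (n + 1) := by
              have := hpU1
              rw [show cutProcess S U (n+1) = if Crosses (S (n+1)) (cutProcess S U n) then
                cutProcess S U n \ S (n+1) else cutProcess S U n from rfl, if_pos hcU,
                mem_sdiff] at this
              exact this.2
            intro x hx
            rw [mem_sdiff]
            refine ⟨hWU hx, fun hxS => ?_⟩
            exact hc ⟨⟨x, mem_inter.mpr ⟨hx, hxS⟩⟩,
              ⟨p, mem_sdiff.mpr ⟨hpW, hpS⟩⟩⟩
          · rw [if_neg hcU]; exact hWU
  obtain ⟨hpW, hWU⟩ := key N le_rfl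
  rw [h] at hWU
  exact Subset.antisymm hWU (singleton_subset_iff.mpr hpW)
end
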